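/- Let n be even, q = e^{2πi/n}, p = -e^{πi/n}, and 0 ≤ k < l ≤ n-1 with k ≡ l (mod n/2). The ℂ-algebra B⁻ = ℂ⟨u₁,u₂⟩/(u₁² - q^{kl}u₂²) is isomorphic as a graded algebra to ℂ⟨u₁,u₂⟩/(u₁u₂ + u₂u₁), via the map sending u₁ ↦ p^{kl}u₁ + (p^{-kl}/2)u₂ and u₂ ↦ u₁ - (q^{-kl}/2)u₂. -/
import Mathlib


noncomputable section

/-- Generator `u i` of the free algebra `ℂ⟨u₁, u₂⟩`. -/
def u (i : Fin 2) : FreeAlgebra ℂ (Fin 2) := FreeAlgebra.ι ℂ i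

/-- The relation defining `B⁻ = ℂ⟨u₁,u₂⟩/(u₁² - q^{kl}u₂²)`. -/
def relBminus (c : ℂ) (a b : FreeAlgebra ℂ (Fin 2)) : Prop :=
  a = u 0 * u 0 - c • (u 1 * u 1) ∧ b = 0

/-- The relation defining the standard algebra `ℂ⟨u₁,u₂⟩/(u₁u₂ + u₂u₁)`. -/
def relStd (a b : FreeAlgebra ℂ (Fin 2)) : Prop :=
  a = u 0 * u 1 + u 1 * u 0 ∧ b = 0

section Key

variable (α : ℂ)

def X : RingQuot relStd := RingQuot.mkAlgHom ℂ relStd (u 0)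
def Y : RingQuot relStd := RingQuot.mkAlgHom ℂ relStd (u 1)
def P (c : ℂ) : RingQuot (relBminus c) := RingQuot.mkAlgHom ℂ (relBminus c) (u 0)
def Q (c : ℂ) : RingQuot (relBminus c) := RingQuot.mkAlgHom ℂ (relBminus c) (u 1)

lemma hXY : X * Y = -(Y * X) := by
  have h := RingQuot.mkAlgHom_rel ℂ (s := relStd)
    (x := u 0 * u 1 + u 1 * u 0) (y := 0) ⟨rfl, rfl⟩
  simp only [map_add, map_mul, map_zero] at h
  rw [eq_neg_iff_add_eq_zero]
  exact h

lemma hPQ (c : ℂ) : P c * P c = c • (Q c * Q c) := by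
  have h := RingQuot.mkAlgHom_rel ℂ (s := relBminus c)
    (x := u 0 * u 0 - c • (u 1 * u 1)) (y := 0) ⟨rfl, rfl⟩
  simp only [map_sub, map_mul, map_smul, map_zero, sub_eq_zero] at h
  exact h

def Fhom : FreeAlgebra ℂ (Fin 2) →ₐ[ℂ] RingQuot relStd :=
  FreeAlgebra.lift ℂ ![α • X + (α⁻¹ / 2) • Y, X - (α⁻¹ ^ 2 / 2) • Y]

def Ghom (c : ℂ) : FreeAlgebra ℂ (Fin 2) →ₐ[ℂ] RingQuot (relBminus c) :=
  FreeAlgebra.lift ℂ ![(α * α⁻¹ ^ 2 / 2) • P c + (1 / 2 : ℂ) • Q c, α • P c - α ^ 2 • Q c]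

lemma Fhom_u0 : Fhom α (u 0) = α • X + (α⁻¹ / 2) • Y := by
  simp [Fhom, u]

lemma Fhom_u1 : Fhom α (u 1) = X - (α⁻¹ ^ 2 / 2) • Y := by
  simp [Fhom, u]

lemma Ghom_u0 (c : ℂ) : Ghom α c (u 0) = (α * α⁻¹ ^ 2 / 2) • P c + (1 / 2 : ℂ) • Q c := by
  simp [Ghom, u]

lemma Ghom_u1 (c : ℂ) : Ghom α c (u 1) = α • P c - α ^ 2 • Q c := by
  simp [Ghom, u]

lemma Fhom_rel (hα : α ≠ 0) :
    ∀ ⦃a b⦄, relBminus (α ^ 2) a b → Fhom α a = Fhom α b := by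
  rintro a b ⟨rfl, rfl⟩
  simp only [map_sub, map_mul, map_smul, map_zero, Fhom_u0, Fhom_u1, sub_eq_zero]
  simp only [add_mul, mul_add, sub_mul, mul_sub, smul_mul_assoc, mul_smul_comm, smul_smul,
    smul_sub, smul_add, hXY]
  match_scalars <;> field_simp <;> ring

lemma Ghom_rel (hα : α ≠ 0) :
    ∀ ⦃a b⦄, relStd a b → Ghom α (α ^ 2) a = Ghom α (α ^ 2) b := by
  rintro a b ⟨rfl, rfl⟩
  simp only [map_add, map_mul, map_zero, Ghom_u0, Ghom_u1]
  simp only [add_mul, mul_add, sub_mul, mul_sub, smul_mul_assoc, mul_smul_comm, smul_smul,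
    smul_sub, smul_add, hPQ]
  match_scalars <;> field_simp <;> ring

end Key

section Key2

variable (α : ℂ)

def fhom (hα : α ≠ 0) : RingQuot (relBminus (α ^ 2)) →ₐ[ℂ] RingQuot relStd :=
  RingQuot.liftAlgHom ℂ ⟨Fhom α, Fhom_rel α hα⟩

def ghom (hα : α ≠ 0) : RingQuot relStd →ₐ[ℂ] RingQuot (relBminus (α ^ 2)) :=
  RingQuot.liftAlgHom ℂ ⟨Ghom α (α ^ 2), Ghom_rel α hα⟩

lemma key (hα : α ≠ 0) :
    ∃ f : RingQuot (relBminus (α ^ 2)) ≃ₐ[ℂ] RingQuot relStd,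
      f (P (α ^ 2)) = α • X + (α⁻¹ / 2) • Y ∧ f (Q (α ^ 2)) = X - (α⁻¹ ^ 2 / 2) • Y := by
  have hf0 : fhom α hα (P (α ^ 2)) = α • X + (α⁻¹ / 2) • Y := by
    rw [fhom, P, RingQuot.liftAlgHom_mkAlgHom_apply, Fhom_u0]
  have hf1 : fhom α hα (Q (α ^ 2)) = X - (α⁻¹ ^ 2 / 2) • Y := by
    rw [fhom, Q, RingQuot.liftAlgHom_mkAlgHom_apply, Fhom_u1]
  have hg0 : ghom α hα X = (α * α⁻¹ ^ 2 / 2) • P (α ^ 2) + (1 / 2 : ℂ) • Q (α ^ 2) := by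
    rw [ghom, X, RingQuot.liftAlgHom_mkAlgHom_apply, Ghom_u0]
  have hg1 : ghom α hα Y = α • P (α ^ 2) - α ^ 2 • Q (α ^ 2) := by
    rw [ghom, Y, RingQuot.liftAlgHom_mkAlgHom_apply, Ghom_u1]
  refine ⟨AlgEquiv.ofAlgHom (fhom α hα) (ghom α hα) ?_ ?_, hf0, hf1⟩
  · ext i
    fin_cases i
    · show (fhom α hα) ((ghom α hα) X) = X
      rw [hg0]
      simp only [map_add, map_smul, hf0, hf1]
      match_scalars <;> field_simp <;> ring
    · show (fhom α hα) ((ghom α hα) Y) = Y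
      rw [hg1]
      simp only [map_sub, map_smul, hf0, hf1]
      match_scalars <;> field_simp <;> ring
  · ext i
    fin_cases i
    · show (ghom α hα) ((fhom α hα) (P (α ^ 2))) = P (α ^ 2)
      rw [hf0]
      simp only [map_add, map_smul, hg0, hg1]
      match_scalars <;> field_simp <;> ring
    · show (ghom α hα) ((fhom α hα) (Q (α ^ 2))) = Q (α ^ 2)
      rw [hf1]
      simp only [map_sub, map_smul, hg0, hg1]
      match_scalars <;> field_simp <;> ring

end Key2


/-- For `n` even, `q = e^{2πi/n}`, `p = -e^{πi/n}` and `0 ≤ k < l ≤ n-1` with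
`k ≡ l (mod n/2)`, the algebra `B⁻ = ℂ⟨u₁,u₂⟩/(u₁² - q^{kl}u₂²)` is isomorphic to
`ℂ⟨u₁,u₂⟩/(u₁u₂ + u₂u₁)` via `u₁ ↦ p^{kl} u₁ + (p^{-kl}/2) u₂`,
`u₂ ↦ u₁ - (q^{-kl}/2) u₂`. -/
theorem Bminus_iso_std (n k l : ℕ) (hn : 1 < n) (heven : Even n)
    (hkl : k < l) (hl : l ≤ n - 1) (hcong : k ≡ l [MOD n / 2])
    (q p : ℂ) (hq : q = Complex.exp (2 * Real.pi * Complex.I / n))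
    (hp : p = -Complex.exp (Real.pi * Complex.I / n)) :
    ∃ f : RingQuot (relBminus (q ^ (k * l))) ≃ₐ[ℂ] RingQuot relStd,
      f (RingQuot.mkAlgHom ℂ (relBminus (q ^ (k * l))) (u 0)) =
        (p ^ (k * l)) • RingQuot.mkAlgHom ℂ relStd (u 0) +
          (p ^ (-(k * l : ℤ)) / 2) • RingQuot.mkAlgHom ℂ relStd (u 1) ∧
      f (RingQuot.mkAlgHom ℂ (relBminus (q ^ (k * l))) (u 1)) =
        RingQuot.mkAlgHom ℂ relStd (u 0) -
          (q ^ (-(k * l : ℤ)) / 2) • RingQuot.mkAlgHom ℂ relStd (u 1) := by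
  have hp0 : p ≠ 0 := by rw [hp]; exact neg_ne_zero.mpr (Complex.exp_ne_zero _)
  have hq2 : q = p ^ 2 := by
    rw [hq, hp, neg_sq, ← Complex.exp_nat_mul]
    congr 1
    push_cast
    ring
  set α := p ^ (k * l) with hαdef
  have hα : α ≠ 0 := pow_ne_zero _ hp0
  have hc : q ^ (k * l) = α ^ 2 := by
    rw [hq2, hαdef, ← pow_mul, ← pow_mul, mul_comm]
  have hz1 : p ^ (-(k * l : ℤ)) = α⁻¹ := by
    rw [← Nat.cast_mul, zpow_neg, zpow_natCast, hαdef]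
  have hz2 : q ^ (-(k * l : ℤ)) = α⁻¹ ^ 2 := by
    rw [← Nat.cast_mul, zpow_neg, zpow_natCast, hc, inv_pow]
  rw [hc, hz1, hz2]
  obtain ⟨f, h0, h1⟩ := key α hα
  exact ⟨f, h0, h1⟩
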